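/- Fix m ∈ ℕ, m ≥ 2, let g_m : [0,1] → [0,1] be the multiple-tent map, and let μ be Lebesgue measure restricted to [0,1] (a probability measure invariant under g_m). Then g_m is strongly mixing with respect to μ: for all measurable sets A, B ⊆ [0,1], μ((g_m^n)⁻¹(A) ∩ B) → μ(A)·μ(B) as n → ∞. -/

import Mathlib

/-!
The tent map `g_1` is the even, `2`-periodic extension of the identity of `[0,1]`, and
`g_M x = g_1 (M x)`; this gives `g_m^[n] = g_{m^n}`. By periodicity and the reflection
`x ↦ 2 - x`, each interval `(0, s]` meets `g_1⁻¹ A` in measure within `2 μ(A)` of `μ(A) s`,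
so after rescaling `(0, t]` meets `g_M⁻¹ A` in measure within `2 μ(A) / M` of `μ(A) t`.
Thus `μ.restrict (g_M⁻¹ A) → μ(A) • μ` on the half-lines `Iic t`. All these measures are
dominated by the finite measure `μ`, so by dominated convergence the sets on which they
converge form a Dynkin system, and the π-λ theorem extends the convergence to all Borel sets.
-/

open MeasureTheory Filter Topology

/-- The multiple-tent map `g_m : [0,1] → [0,1]`, `g_m(x) = mx − 2j` on
`[2j/m,(2j+1)/m]` and `g_m(x) = −mx + 2j` on `[(2j−1)/m, 2j/m]`; equivalently
`g_m(x) = 1 − |((mx) mod 2) − 1|`. -/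
noncomputable def tentMap (m : ℕ) (x : ℝ) : ℝ :=
  1 - |2 * Int.fract ((m : ℝ) * x / 2) - 1|

open Set

theorem MeasureTheory.tendsto_measure_of_isPiSystem {α ι : Type*} [m : MeasurableSpace α]
    {l : Filter ι} [l.IsCountablyGenerated] {μ ν : Measure α} [IsFiniteMeasure μ]
    [IsFiniteMeasure ν] {ν' : ι → Measure α} (hν' : ∀ i, ν' i ≤ μ) {S : Set (Set α)}
    (h_gen : m = MeasurableSpace.generateFrom S) (h_pi : IsPiSystem S)
    (h_univ : Tendsto (fun i ↦ ν' i univ) l (𝓝 (ν univ)))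
    (h_basic : ∀ s ∈ S, Tendsto (fun i ↦ ν' i s) l (𝓝 (ν s)))
    {s : Set α} (hs : MeasurableSet s) : Tendsto (fun i ↦ ν' i s) l (𝓝 (ν s)) := by
  have hfin : ∀ i t, ν' i t ≠ ⊤ := fun i t ↦ ((hν' i t).trans_lt (measure_lt_top μ t)).ne
  induction s, hs using MeasurableSpace.induction_on_inter h_gen h_pi with
  | empty => simpa using tendsto_const_nhds
  | basic t ht => exact h_basic t ht
  | compl t ht ih =>
    simp only [measure_compl ht (hfin _ t), measure_compl ht (measure_ne_top ν t)]
    exact ENNReal.Tendsto.sub h_univ ih (.inl (measure_ne_top ν univ))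
  | iUnion f hf_disj hf ih =>
    simp only [measure_iUnion hf_disj hf, ← lintegral_count]
    refine tendsto_lintegral_filter_of_dominated_convergence (fun n ↦ μ (f n))
      (.of_forall fun _ ↦ .of_discrete) (.of_forall fun i ↦ ae_of_all _ fun n ↦ hν' i (f n))
      ?_ (ae_of_all _ ih)
    rw [lintegral_count, ← measure_iUnion hf_disj hf]
    exact measure_ne_top μ _

lemma MeasureTheory.MeasurePreserving.measure_preimage_inter_preimage {α β : Type*}
    [MeasurableSpace α] {μ : Measure α} {φ : α → α} {g : α → β} (hφ : MeasurePreserving φ μ μ)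
    (hg : g ∘ φ = g) {s : Set β} {t : Set α} (hst : NullMeasurableSet (g ⁻¹' s ∩ t) μ) :
    μ (g ⁻¹' s ∩ φ ⁻¹' t) = μ (g ⁻¹' s ∩ t) := by
  rw [← hφ.measure_preimage hst, preimage_inter, ← preimage_comp, hg]

lemma tentMap_eq_tentMap_one_mul (M : ℕ) (x : ℝ) : tentMap M x = tentMap 1 (M * x) := by
  simp [tentMap]

lemma tentMap_one_add_two_mul_intCast (y : ℝ) (k : ℤ) : tentMap 1 (y + 2 * k) = tentMap 1 y := by
  simp only [tentMap, Nat.cast_one, one_mul]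
  rw [show (y + 2 * k) / 2 = y / 2 + k by ring, Int.fract_add_intCast]

lemma tentMap_one_neg (y : ℝ) : tentMap 1 (-y) = tentMap 1 y := by
  simp only [tentMap, Nat.cast_one, one_mul, neg_div]
  rcases eq_or_ne (Int.fract (y / 2)) 0 with h | h
  · rw [Int.fract_neg_eq_zero.mpr h, h]
  · rw [Int.fract_neg h, ← abs_neg]
    ring_nf

lemma tentMap_one_of_mem_Icc {y : ℝ} (hy : y ∈ Icc 0 1) : tentMap 1 y = y := by
  have hfract : Int.fract (y / 2) = y / 2 :=
    Int.fract_eq_self.mpr ⟨by linarith [hy.1], by linarith [hy.2]⟩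
  rw [tentMap, Nat.cast_one, one_mul, hfract, abs_of_nonpos (by linarith [hy.2])]
  ring

lemma exists_tentMap_one_eq (y : ℝ) :
    ∃ k : ℤ, tentMap 1 y = y + 2 * k ∨ tentMap 1 y = -y + 2 * k := by
  have hy : y = 2 * ⌊y / 2⌋ + 2 * Int.fract (y / 2) := by
    linarith [Int.floor_add_fract (y / 2)]
  rw [tentMap, Nat.cast_one, one_mul]
  rcases le_total (2 * Int.fract (y / 2)) 1 with h | h
  · refine ⟨-⌊y / 2⌋, .inl ?_⟩
    rw [abs_of_nonpos (by linarith)]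
    push_cast
    linarith
  · refine ⟨⌊y / 2⌋ + 1, .inr ?_⟩
    rw [abs_of_nonneg (by linarith)]
    push_cast
    linarith

lemma tentMap_one_intCast_mul_tentMap_one (a : ℤ) (y : ℝ) :
    tentMap 1 (a * tentMap 1 y) = tentMap 1 (a * y) := by
  obtain ⟨k, h | h⟩ := exists_tentMap_one_eq y <;> rw [h]
  · rw [show (a : ℝ) * (y + 2 * k) = a * y + 2 * (a * k : ℤ) by push_cast; ring,
      tentMap_one_add_two_mul_intCast]
  · rw [show (a : ℝ) * (-y + 2 * k) = -(a * y) + 2 * (a * k : ℤ) by push_cast; ring,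
      tentMap_one_add_two_mul_intCast, tentMap_one_neg]

lemma tentMap_comp_tentMap (a b : ℕ) : tentMap a ∘ tentMap b = tentMap (a * b) := by
  ext x
  simp only [Function.comp_apply, tentMap_eq_tentMap_one_mul a, tentMap_eq_tentMap_one_mul b]
  rw [← Int.cast_natCast a, tentMap_one_intCast_mul_tentMap_one, Int.cast_natCast,
    tentMap_eq_tentMap_one_mul (a * b), Nat.cast_mul, mul_assoc]

lemma tentMap_iterate_succ (m n : ℕ) : (tentMap m)^[n + 1] = tentMap (m ^ (n + 1)) := by
  induction n with
  | zero => simp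
  | succ n ih => rw [Function.iterate_succ', ih, tentMap_comp_tentMap, ← pow_succ']

lemma measurable_tentMap (M : ℕ) : Measurable (tentMap M) := by
  unfold tentMap
  fun_prop

lemma volume_restrict_Icc_zero_one_apply (s : Set ℝ) :
    volume.restrict (Icc 0 1) s = volume (s ∩ Ioc 0 1) := by
  rw [← Measure.restrict_congr_set Ioc_ae_eq_Icc, Measure.restrict_apply' measurableSet_Ioc]

lemma volume_tentMap_one_preimage_inter_Ioc_zero_two {A : Set ℝ} (hA : MeasurableSet A) :
    volume (tentMap 1 ⁻¹' A ∩ Ioc 0 2) = 2 * volume.restrict (Icc 0 1) A := by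
  have hP : MeasurableSet (tentMap 1 ⁻¹' A) := measurable_tentMap 1 hA
  have h_reflect : tentMap 1 ∘ (fun x ↦ 2 - x) = tentMap 1 := by
    ext x
    rw [Function.comp_apply, sub_eq_neg_add, show (2 : ℝ) = 2 * (1 : ℤ) by simp,
      tentMap_one_add_two_mul_intCast, tentMap_one_neg]
  have h_right : volume (tentMap 1 ⁻¹' A ∩ Ioc 1 2) = volume (tentMap 1 ⁻¹' A ∩ Ioc 0 1) := by
    rw [show Ioc (1 : ℝ) 2 = (fun x ↦ 2 - x) ⁻¹' Ico 0 1 by rw [preimage_const_sub_Ico]; norm_num,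
      (Measure.measurePreserving_sub_left volume 2).measure_preimage_inter_preimage h_reflect
        (hP.inter measurableSet_Ico).nullMeasurableSet]
    exact measure_congr (EventuallyEq.rfl.inter Ico_ae_eq_Ioc)
  have h_left : tentMap 1 ⁻¹' A ∩ Ioc 0 1 = A ∩ Ioc 0 1 := by
    ext x
    simp only [mem_inter_iff, mem_preimage]
    exact and_congr_left fun hx ↦ by rw [tentMap_one_of_mem_Icc (Ioc_subset_Icc_self hx)]
  rw [← Ioc_union_Ioc_eq_Ioc zero_le_one one_le_two, inter_union_distrib_left,
    measure_union ((Ioc_disjoint_Ioc_of_le le_rfl).mono inter_subset_right inter_subset_right)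
      (hP.inter measurableSet_Ioc), h_right, h_left, volume_restrict_Icc_zero_one_apply, two_mul]

lemma volume_tentMap_one_preimage_inter_Ioc_add_two {A : Set ℝ} (hA : MeasurableSet A) {t : ℝ}
    (ht : 0 ≤ t) :
    volume (tentMap 1 ⁻¹' A ∩ Ioc 0 (t + 2))
      = volume (tentMap 1 ⁻¹' A ∩ Ioc 0 t) + 2 * volume.restrict (Icc 0 1) A := by
  have hP : MeasurableSet (tentMap 1 ⁻¹' A) := measurable_tentMap 1 hA
  have h_shift : tentMap 1 ∘ (fun x ↦ x - 2) = tentMap 1 := by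
    ext x
    rw [Function.comp_apply, sub_eq_add_neg, show -(2 : ℝ) = 2 * (-1 : ℤ) by simp,
      tentMap_one_add_two_mul_intCast]
  have h_tail : volume (tentMap 1 ⁻¹' A ∩ Ioc 2 (t + 2)) = volume (tentMap 1 ⁻¹' A ∩ Ioc 0 t) := by
    rw [show Ioc 2 (t + 2) = (fun x ↦ x - 2) ⁻¹' Ioc 0 t by rw [preimage_sub_const_Ioc, zero_add]]
    exact (measurePreserving_sub_right volume 2).measure_preimage_inter_preimage h_shift
      (hP.inter measurableSet_Ioc).nullMeasurableSet
  rw [← Ioc_union_Ioc_eq_Ioc zero_le_two (by linarith), inter_union_distrib_left,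
    measure_union ((Ioc_disjoint_Ioc_of_le le_rfl).mono inter_subset_right inter_subset_right)
      (hP.inter measurableSet_Ioc), h_tail, volume_tentMap_one_preimage_inter_Ioc_zero_two hA,
    add_comm]

lemma volume_tentMap_one_preimage_inter_Ioc_add_two_mul {A : Set ℝ} (hA : MeasurableSet A)
    {t : ℝ} (ht : 0 ≤ t) (q : ℕ) :
    volume (tentMap 1 ⁻¹' A ∩ Ioc 0 (t + 2 * q))
      = volume (tentMap 1 ⁻¹' A ∩ Ioc 0 t) + q * (2 * volume.restrict (Icc 0 1) A) := by
  induction q with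
  | zero => simp
  | succ q ih =>
    rw [Nat.cast_succ, mul_add_one, ← add_assoc,
      volume_tentMap_one_preimage_inter_Ioc_add_two hA (by positivity), ih]
    push_cast
    ring

lemma abs_toReal_volume_tentMap_one_preimage_inter_Ioc_sub_le {A : Set ℝ} (hA : MeasurableSet A)
    {s : ℝ} (hs : 0 ≤ s) :
    |(volume (tentMap 1 ⁻¹' A ∩ Ioc 0 s)).toReal - (volume.restrict (Icc 0 1) A).toReal * s|
      ≤ 2 * (volume.restrict (Icc 0 1) A).toReal := by
  set c := (volume.restrict (Icc 0 1) A).toReal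
  set q := ⌊s / 2⌋₊
  have hr0 : 0 ≤ s - 2 * q := by linarith [Nat.floor_le (by positivity : 0 ≤ s / 2)]
  have hr2 : s - 2 * q ≤ 2 := by linarith [Nat.lt_floor_add_one (s / 2)]
  have hG : volume (tentMap 1 ⁻¹' A ∩ Ioc 0 s)
      = volume (tentMap 1 ⁻¹' A ∩ Ioc 0 (s - 2 * q)) + q * (2 * volume.restrict (Icc 0 1) A) := by
    rw [← volume_tentMap_one_preimage_inter_Ioc_add_two_mul hA hr0, sub_add_cancel]
  have hGr : volume (tentMap 1 ⁻¹' A ∩ Ioc 0 (s - 2 * q)) ≤ 2 * volume.restrict (Icc 0 1) A :=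
    (measure_mono (inter_subset_inter_right _ (Ioc_subset_Ioc_right hr2))).trans_eq
      (volume_tentMap_one_preimage_inter_Ioc_zero_two hA)
  have hfin : volume (tentMap 1 ⁻¹' A ∩ Ioc 0 (s - 2 * q)) ≠ ⊤ :=
    ((measure_mono inter_subset_right).trans_lt measure_Ioc_lt_top).ne
  have hGr_real := ENNReal.toReal_mono (by finiteness) hGr
  rw [hG, ENNReal.toReal_add hfin (by finiteness)]
  simp only [ENNReal.toReal_mul, ENNReal.toReal_natCast, ENNReal.toReal_ofNat] at hGr_real ⊢
  have hc : 0 ≤ c := ENNReal.toReal_nonneg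
  have hcr : c * (s - 2 * q) ≤ c * 2 := mul_le_mul_of_nonneg_left hr2 hc
  have hcr0 : 0 ≤ c * (s - 2 * q) := mul_nonneg hc hr0
  have hGr0 := ENNReal.toReal_nonneg (a := volume (tentMap 1 ⁻¹' A ∩ Ioc 0 (s - 2 * q)))
  have hcs : c * s = c * (s - 2 * q) + q * (2 * c) := by ring
  rw [abs_le]
  constructor <;> linarith

lemma volume_tentMap_preimage_inter_Ioc (A : Set ℝ) {M : ℕ} (hM : M ≠ 0) (t : ℝ) :
    volume (tentMap M ⁻¹' A ∩ Ioc 0 t)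
      = ENNReal.ofReal (M : ℝ)⁻¹ * volume (tentMap 1 ⁻¹' A ∩ Ioc 0 (M * t)) := by
  have hM' : (0 : ℝ) < M := by positivity
  rw [← abs_of_pos (inv_pos.mpr hM'), ← Real.volume_preimage_mul_left hM'.ne', preimage_inter,
    ← preimage_comp, preimage_const_mul_Ioc₀ _ _ hM', zero_div, mul_div_cancel_left₀ _ hM'.ne']
  congr 3
  ext x
  exact tentMap_eq_tentMap_one_mul M x

lemma abs_toReal_volume_tentMap_preimage_inter_Ioc_sub_le {A : Set ℝ} (hA : MeasurableSet A)
    {M : ℕ} (hM : M ≠ 0) {t : ℝ} (ht : 0 ≤ t) :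
    |(volume (tentMap M ⁻¹' A ∩ Ioc 0 t)).toReal - (volume.restrict (Icc 0 1) A).toReal * t|
      ≤ 2 * (volume.restrict (Icc 0 1) A).toReal / M := by
  have hM' : (0 : ℝ) < M := by positivity
  have h := abs_toReal_volume_tentMap_one_preimage_inter_Ioc_sub_le hA (mul_nonneg hM'.le ht)
  rw [volume_tentMap_preimage_inter_Ioc A hM, ENNReal.toReal_mul,
    ENNReal.toReal_ofReal (inv_nonneg.mpr hM'.le), le_div_iff₀ hM']
  calc _ = |(volume (tentMap 1 ⁻¹' A ∩ Ioc 0 (M * t))).toReal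
        - (volume.restrict (Icc 0 1) A).toReal * (M * t)| := by
        rw [← abs_of_pos hM', ← abs_mul, abs_of_pos hM']
        congr 1
        field_simp
    _ ≤ _ := h

lemma tendsto_volume_tentMap_preimage_inter_Ioc {A : Set ℝ} (hA : MeasurableSet A) (t : ℝ) :
    Tendsto (fun M : ℕ ↦ volume (tentMap M ⁻¹' A ∩ Ioc 0 t)) atTop
      (𝓝 (volume.restrict (Icc 0 1) A * volume (Ioc 0 t))) := by
  rcases le_or_gt t 0 with ht | ht
  · simp [Ioc_eq_empty_of_le ht]
  rw [← ENNReal.tendsto_toReal_iff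
      (fun _ ↦ ((measure_mono inter_subset_right).trans_lt measure_Ioc_lt_top).ne)
      (ENNReal.mul_ne_top (measure_ne_top _ _) measure_Ioc_lt_top.ne),
    ENNReal.toReal_mul, Real.volume_Ioc, sub_zero, ENNReal.toReal_ofReal ht.le,
    tendsto_iff_norm_sub_tendsto_zero]
  refine squeeze_zero' (.of_forall fun _ ↦ norm_nonneg _) ?_
    (tendsto_const_div_atTop_nhds_zero_nat (2 * (volume.restrict (Icc 0 1) A).toReal))
  filter_upwards [eventually_ne_atTop 0] with M hM
  exact abs_toReal_volume_tentMap_preimage_inter_Ioc_sub_le hA hM ht.le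

lemma tendsto_volume_restrict_tentMap_preimage_inter {A B : Set ℝ} (hA : MeasurableSet A)
    (hB : MeasurableSet B) :
    Tendsto (fun M : ℕ ↦ volume.restrict (Icc 0 1) (tentMap M ⁻¹' A ∩ B)) atTop
      (𝓝 (volume.restrict (Icc (0 : ℝ) 1) A * volume.restrict (Icc 0 1) B)) := by
  set μ := volume.restrict (Icc (0 : ℝ) 1)
  have := μ.smul_finite (measure_ne_top μ A)
  have h_restrict (M : ℕ) (s : Set ℝ) :
      μ.restrict (tentMap M ⁻¹' A) s = μ (tentMap M ⁻¹' A ∩ s) := by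
    rw [Measure.restrict_apply' (measurable_tentMap M hA), inter_comm]
  have h_Iic (t : ℝ) : Iic t ∩ Ioc 0 1 = Ioc 0 (min t 1) := by
    ext x
    simp only [mem_inter_iff, mem_Iic, mem_Ioc, le_min_iff]
    tauto
  have h_conv := tendsto_measure_of_isPiSystem (l := atTop) (μ := μ) (ν := μ A • μ)
    (ν' := fun M ↦ μ.restrict (tentMap M ⁻¹' A)) (fun _ ↦ Measure.restrict_le_self)
    (borel_eq_generateFrom_Iic ℝ ▸ BorelSpace.measurable_eq) isPiSystem_Iic ?_ ?_ hB
  · simpa only [h_restrict, Measure.smul_apply, smul_eq_mul] using h_conv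
  · simpa only [h_restrict, inter_univ, Measure.smul_apply, smul_eq_mul, μ,
      volume_restrict_Icc_zero_one_apply, univ_inter]
      using tendsto_volume_tentMap_preimage_inter_Ioc hA 1
  · rintro _ ⟨t, rfl⟩
    simpa only [h_restrict, Measure.smul_apply, smul_eq_mul, μ, volume_restrict_Icc_zero_one_apply,
      inter_assoc, h_Iic] using tendsto_volume_tentMap_preimage_inter_Ioc hA (min t 1)

theorem tentMap_strongly_mixing_general (m : ℕ) (hm : 2 ≤ m)
    (A B : Set ℝ) (hA : MeasurableSet A) (hB : MeasurableSet B) :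
    Tendsto
      (fun n : ℕ => (volume.restrict (Set.Icc (0 : ℝ) 1)) ((tentMap m)^[n] ⁻¹' A ∩ B))
      atTop
      (𝓝 ((volume.restrict (Set.Icc (0 : ℝ) 1)) A *
          (volume.restrict (Set.Icc (0 : ℝ) 1)) B)) := by
  rw [← tendsto_add_atTop_iff_nat 1]
  simp only [tentMap_iterate_succ]
  exact (tendsto_volume_restrict_tentMap_preimage_inter hA hB).comp
    ((tendsto_pow_atTop_atTop_of_one_lt hm).comp (tendsto_add_atTop_nat 1))

/-- For `m ≥ 2`, the multiple-tent map `g_m` is strongly mixing with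
respect to Lebesgue measure restricted to `[0,1]`: for all measurable
`A, B ⊆ [0,1]`, `μ((g_mⁿ)⁻¹(A) ∩ B) → μ(A)·μ(B)` as `n → ∞`. -/
theorem tentMap_strongly_mixing (m : ℕ) (hm : 2 ≤ m)
    (A B : Set ℝ) (hA : MeasurableSet A) (hB : MeasurableSet B)
    (hAsub : A ⊆ Set.Icc (0 : ℝ) 1) (hBsub : B ⊆ Set.Icc (0 : ℝ) 1) :
    Tendsto
      (fun n : ℕ => (volume.restrict (Set.Icc (0 : ℝ) 1)) ((tentMap m)^[n] ⁻¹' A ∩ B))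
      atTop
      (𝓝 ((volume.restrict (Set.Icc (0 : ℝ) 1)) A *
          (volume.restrict (Set.Icc (0 : ℝ) 1)) B)) :=
  tentMap_strongly_mixing_general m hm A B hA hB
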